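/- arXiv:1212.0369 — 3 statements merged into one kernel-verified Lean document; each statement's English description precedes it below -/
import Mathlib

section
/- Let x⁰ ∈ ℝ^m have support I with IC(x⁰) < 1, let s = Aᵗd(x⁰), and let x⋆ be any vector. Then the Bregman distance satisfies D_s(x⋆, x⁰) ≥ (1 − IC(x⁰)) · ‖x⋆_{I^c}‖₁, where x⋆_{I^c} is the restriction of x⋆ to the complement of I. -/
open Finset Matrix

/-- ℓ¹ norm of a finitely-indexed real vector. -/
noncomputable def l1 {ι : Type*} [Fintype ι] (x : ι → ℝ) : ℝ := ∑ i, |x i|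

/-- ℓ² (Euclidean) norm. -/
noncomputable def l2 {ι : Type*} [Fintype ι] (x : ι → ℝ) : ℝ := Real.sqrt (∑ i, (x i) ^ 2)

/-- ℓ^∞ norm. -/
noncomputable def linf {ι : Type*} [Fintype ι] (x : ι → ℝ) : ℝ := sSup {y | ∃ i, y = |x i|}

/-- Operator norm induced by the Euclidean norms (spectral norm). -/
noncomputable def opNorm2 {ι κ : Type*} [Fintype ι] [Fintype κ] (M : Matrix ι κ ℝ) : ℝ :=
  sSup {y | ∃ x : κ → ℝ, l2 x ≤ 1 ∧ y = l2 (M.mulVec x)}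

/-- Operator norm from ℓ¹ to ℓ². -/
noncomputable def norm12 {ι κ : Type*} [Fintype ι] [Fintype κ] (M : Matrix ι κ ℝ) : ℝ :=
  sSup {y | ∃ x : κ → ℝ, x ≠ 0 ∧ y = l2 (M.mulVec x) / l1 x}

/-- Submatrix of the columns of `A` indexed by `I`. -/
def colSub {n m : ℕ} (A : Matrix (Fin n) (Fin m) ℝ) (I : Finset (Fin m)) :
    Matrix (Fin n) {j // j ∈ I} ℝ := fun i j => A i j

/-- The Gram matrix `A_Iᵗ A_I`. -/
def gram {n m : ℕ} (A : Matrix (Fin n) (Fin m) ℝ) (I : Finset (Fin m)) :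
    Matrix {j // j ∈ I} {j // j ∈ I} ℝ := (colSub A I)ᵀ * colSub A I

/-- The sign vector of `x` restricted to `I`. -/
noncomputable def signI {m : ℕ} (x : Fin m → ℝ) (I : Finset (Fin m)) : {j // j ∈ I} → ℝ :=
  fun j => Real.sign (x j)

/-- The vector `d(x) = A_I (A_IᵗA_I)⁻¹ sign(x_I)`. -/
noncomputable def dvec {n m : ℕ} (A : Matrix (Fin n) (Fin m) ℝ) (I : Finset (Fin m))
    (x : Fin m → ℝ) : Fin n → ℝ :=
  (colSub A I).mulVec ((gram A I)⁻¹.mulVec (signI x I))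

/-- The identification coefficient `IC(x) = max_{j ∉ I} |a_jᵗ d(x)|`. -/
noncomputable def IC {n m : ℕ} (A : Matrix (Fin n) (Fin m) ℝ) (I : Finset (Fin m))
    (x : Fin m → ℝ) : ℝ :=
  sSup {y | ∃ j ∉ I, y = |∑ i, A i j * dvec A I x i|}

/-- Restriction of `x` to `I`, extended by zero. -/
def restr {m : ℕ} (I : Finset (Fin m)) (x : Fin m → ℝ) : Fin m → ℝ :=
  fun i => if i ∈ I then x i else 0

/-!
On the support `I` of `x⁰` the vector `s = Aᵗ d(x⁰)` equals `sign x⁰` (because `A_Iᵗ d(x⁰) = sign(x⁰_I)`),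
and off `I` it is bounded by `IC(x⁰)` in absolute value. The Bregman distance of the `ℓ¹` norm splits
into coordinatewise terms `|x⋆ⱼ| - |x⁰ⱼ| - sⱼ (x⋆ⱼ - x⁰ⱼ)`: those with `j ∈ I` are nonnegative since
`sign x⁰ⱼ` is a subgradient of `|·|` at `x⁰ⱼ`, and those with `j ∉ I` (where `x⁰ⱼ = 0`) are at least
`(1 - IC(x⁰)) |x⋆ⱼ|`.
-/

namespace Real

lemma sign_mul_self_eq_abs (x : ℝ) : sign x * x = |x| := by
  rcases lt_trichotomy x 0 with h | rfl | h
  · rw [sign_of_neg h, abs_of_neg h]; ring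
  · simp
  · rw [sign_of_pos h, abs_of_pos h]; ring

lemma abs_sign_le_one (x : ℝ) : |sign x| ≤ 1 := by
  rcases sign_apply_eq x with h | h | h <;> simp [h]

lemma sign_mul_le_abs (a b : ℝ) : sign a * b ≤ |b| :=
  calc sign a * b ≤ |sign a| * |b| := by rw [← abs_mul]; exact le_abs_self _
    _ ≤ |b| := mul_le_of_le_one_left (abs_nonneg b) (abs_sign_le_one a)

lemma abs_sub_abs_sub_sign_mul_nonneg (a b : ℝ) : 0 ≤ |b| - |a| - sign a * (b - a) := by
  have := sign_mul_le_abs a b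
  rw [mul_sub, sign_mul_self_eq_abs]
  linarith

end Real

lemma one_sub_mul_abs_le_abs_sub_mul {s c : ℝ} (hs : |s| ≤ c) (b : ℝ) :
    (1 - c) * |b| ≤ |b| - s * b := by
  have : s * b ≤ c * |b| :=
    calc s * b ≤ |s| * |b| := by rw [← abs_mul]; exact le_abs_self _
      _ ≤ c * |b| := mul_le_mul_of_nonneg_right hs (abs_nonneg b)
  linarith

theorem one_sub_mul_sum_compl_abs_le_sum_bregman {ι : Type*} [Fintype ι] [DecidableEq ι]
    (I : Finset ι) (x0 xs s : ι → ℝ) (c : ℝ) (hx0 : ∀ j ∉ I, x0 j = 0)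
    (hsI : ∀ j ∈ I, s j = Real.sign (x0 j)) (hsIc : ∀ j ∉ I, |s j| ≤ c) :
    (1 - c) * ∑ j ∈ Iᶜ, |xs j| ≤ ∑ j, (|xs j| - |x0 j| - s j * (xs j - x0 j)) := by
  rw [← sum_add_sum_compl I, mul_sum]
  have hI : 0 ≤ ∑ j ∈ I, (|xs j| - |x0 j| - s j * (xs j - x0 j)) := by
    refine sum_nonneg fun j hj => ?_
    rw [hsI j hj]
    exact Real.abs_sub_abs_sub_sign_mul_nonneg _ _
  have hIc : ∑ j ∈ Iᶜ, (1 - c) * |xs j| ≤ ∑ j ∈ Iᶜ, (|xs j| - |x0 j| - s j * (xs j - x0 j)) := by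
    refine sum_le_sum fun j hj => ?_
    have hj : j ∉ I := mem_compl.mp hj
    rw [hx0 j hj, abs_zero, sub_zero, sub_zero]
    exact one_sub_mul_abs_le_abs_sub_mul (hsIc j hj) _
  linarith

lemma l1_restr {m : ℕ} (I : Finset (Fin m)) (x : Fin m → ℝ) : l1 (restr I x) = ∑ j ∈ I, |x j| := by
  simp [l1, restr, apply_ite, sum_ite_mem]

section dvec

variable {n m : ℕ} (A : Matrix (Fin n) (Fin m) ℝ) (I : Finset (Fin m)) (x : Fin m → ℝ)

lemma transpose_colSub_mulVec_dvec (hinv : IsUnit (gram A I).det) :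
    (colSub A I)ᵀ *ᵥ dvec A I x = signI x I := by
  rw [dvec, mulVec_mulVec, mulVec_mulVec, ← _root_.gram, mul_nonsing_inv _ hinv, one_mulVec]

lemma transpose_mulVec_dvec_of_mem (hinv : IsUnit (gram A I).det) {j : Fin m} (hj : j ∈ I) :
    (Aᵀ *ᵥ dvec A I x) j = Real.sign (x j) :=
  congrFun (transpose_colSub_mulVec_dvec A I x hinv) ⟨j, hj⟩

lemma abs_transpose_mulVec_dvec_le_IC {j : Fin m} (hj : j ∉ I) :
    |(Aᵀ *ᵥ dvec A I x) j| ≤ IC A I x := by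
  refine le_csSup ?_ ⟨j, hj, rfl⟩
  refine (Set.finite_range fun j => |∑ i, A i j * dvec A I x i|).subset ?_ |>.bddAbove
  rintro _ ⟨j, -, rfl⟩
  exact ⟨j, rfl⟩

end dvec

theorem bregman_lower_bound_general {n m : ℕ} (A : Matrix (Fin n) (Fin m) ℝ) (x0 xs : Fin m → ℝ)
    (I : Finset (Fin m)) (hI : ∀ i, i ∈ I ↔ x0 i ≠ 0)
    (hinv : IsUnit (gram A I).det) :
    (1 - IC A I x0) * l1 (restr Iᶜ xs) ≤
      l1 xs - l1 x0 - ∑ j, (Aᵀ.mulVec (dvec A I x0)) j * (xs j - x0 j) := by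
  have hx0 : ∀ j ∉ I, x0 j = 0 := fun j hj => not_not.mp (mt (hI j).mpr hj)
  have key := one_sub_mul_sum_compl_abs_le_sum_bregman I x0 xs (Aᵀ *ᵥ dvec A I x0) (IC A I x0) hx0
    (fun _ => transpose_mulVec_dvec_of_mem A I x0 hinv)
    (fun _ => abs_transpose_mulVec_dvec_le_IC A I x0)
  rwa [l1_restr, l1, l1, ← sum_sub_distrib, ← sum_sub_distrib]

/-- Bregman distance lower bound `D_s(x⋆, x⁰) ≥ (1 − IC(x⁰)) ‖x⋆_{I^c}‖₁`. -/
theorem bregman_lower_bound {n m : ℕ} (A : Matrix (Fin n) (Fin m) ℝ) (x0 xs : Fin m → ℝ)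
    (I : Finset (Fin m)) (hI : ∀ i, i ∈ I ↔ x0 i ≠ 0)
    (hinv : IsUnit (gram A I).det) (hIC : IC A I x0 < 1) :
    (1 - IC A I x0) * l1 (restr Iᶜ xs) ≤
      l1 xs - l1 x0 - ∑ j, (Aᵀ.mulVec (dvec A I x0)) j * (xs j - x0 j) :=
  bregman_lower_bound_general A x0 xs I hI hinv
end

section
/- Let y = Ax⁰ + b with ‖b‖₂ ≤ ε, let x⋆ satisfy ‖Ax⋆ − y‖₂ ≤ ε and ‖x⋆‖₁ ≤ ‖x⁰‖₁, and let s = Aᵗd(x⁰) with IC(x⁰) < 1. Then the Bregman distance satisfies D_s(x⋆, x⁰) ≤ 2‖d(x⁰)‖₂ · ε. -/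
open Finset Matrix

/-!
Since `‖x⋆‖₁ ≤ ‖x⁰‖₁`, the Bregman distance is at most `-⟨Aᵗd, x⋆ - x⁰⟩ = -⟨d, A x⋆ - A x⁰⟩`,
and `A x⋆ - A x⁰ = (A x⋆ - y) + b` is a sum of two vectors of `ℓ²`-norm at most `ε`;
Cauchy–Schwarz bounds each pairing with `d` by `‖d‖₂ ε`.
-/

lemma abs_dotProduct_le_l2_mul_l2 {ι : Type*} [Fintype ι] (f g : ι → ℝ) :
    |f ⬝ᵥ g| ≤ l2 f * l2 g := by
  rw [← Real.sqrt_sq_eq_abs, l2, l2, ← Real.sqrt_mul (by positivity)]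
  exact Real.sqrt_le_sqrt (sum_mul_sq_le_sq_mul_sq _ _ _)

lemma abs_dotProduct_le_of_l2_le {ι : Type*} [Fintype ι] (f g : ι → ℝ) {ε : ℝ}
    (hg : l2 g ≤ ε) : |f ⬝ᵥ g| ≤ l2 f * ε :=
  (abs_dotProduct_le_l2_mul_l2 f g).trans
    (mul_le_mul_of_nonneg_left hg (Real.sqrt_nonneg _))

theorem bregman_upper_bound_general {n m : ℕ} (A : Matrix (Fin n) (Fin m) ℝ)
    (x0 xs : Fin m → ℝ) (b y : Fin n → ℝ) (ε : ℝ)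
    (I : Finset (Fin m))
    (hy : y = A.mulVec x0 + b) (hb : l2 b ≤ ε)
    (hxs : l2 (A.mulVec xs - y) ≤ ε) (hl1 : l1 xs ≤ l1 x0) :
    l1 xs - l1 x0 - ∑ j, (Aᵀ.mulVec (dvec A I x0)) j * (xs j - x0 j) ≤
      2 * l2 (dvec A I x0) * ε := by
  set d := dvec A I x0
  have hsplit : A *ᵥ (xs - x0) = (A *ᵥ xs - y) + b := by
    rw [mulVec_sub, hy]
    abel
  have hpair : (Aᵀ *ᵥ d) ⬝ᵥ (xs - x0) = d ⬝ᵥ (A *ᵥ xs - y) + d ⬝ᵥ b := by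
    rw [mulVec_transpose, ← dotProduct_mulVec, hsplit, dotProduct_add]
  have hres := abs_le.mp (abs_dotProduct_le_of_l2_le d _ hxs)
  have hnoise := abs_le.mp (abs_dotProduct_le_of_l2_le d b hb)
  change l1 xs - l1 x0 - (Aᵀ *ᵥ d) ⬝ᵥ (xs - x0) ≤ 2 * l2 d * ε
  rw [hpair]
  linarith [hres.1, hnoise.1]

/-- Bregman distance upper bound `D_s(x⋆, x⁰) ≤ 2 ‖d(x⁰)‖₂ ε`. -/
theorem bregman_upper_bound {n m : ℕ} (A : Matrix (Fin n) (Fin m) ℝ)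
    (x0 xs : Fin m → ℝ) (b y : Fin n → ℝ) (ε : ℝ)
    (I : Finset (Fin m)) (hI : ∀ i, i ∈ I ↔ x0 i ≠ 0)
    (hinv : IsUnit (gram A I).det) (hIC : IC A I x0 < 1)
    (hy : y = A.mulVec x0 + b) (hb : l2 b ≤ ε)
    (hxs : l2 (A.mulVec xs - y) ≤ ε) (hl1 : l1 xs ≤ l1 x0) :
    l1 xs - l1 x0 - ∑ j, (Aᵀ.mulVec (dvec A I x0)) j * (xs j - x0 j) ≤
      2 * l2 (dvec A I x0) * ε :=
  bregman_upper_bound_general A x0 xs b y ε I hy hb hxs hl1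
end

section
/- Let x⁰ have support I, suppose IC(x⁰) < 1, and let x¹ be any vector with ‖Ax¹ − y‖₂ ≤ ε and ‖x¹‖₁ ≤ ‖x⁰‖₁, where y = Ax⁰ + b and ‖b‖₂ ≤ ε. Then ‖x¹ − x⁰‖₂ ≤ 2ε(√(‖(A_IᵗA_I)⁻¹‖₂) + (‖d(x⁰)‖₂/(1−IC(x⁰)))(√(‖(A_IᵗA_I)⁻¹‖₂)·‖A_{I^c}‖_{1→2} + 1)); i.e., the error bound holds for any feasible vector with smaller ℓ¹ norm, not only minimizers. -/
open Finset Matrix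

/-!
Write `h = x₁ - x₀` as `u` on the support `I` and `v` off it. Both `x₀` and `x₁` are feasible, so
`‖Ah‖₂ ≤ 2ε`. Since `‖x₀ + h‖₁ ≤ ‖x₀‖₁`, `h` lies in the descent cone `‖v‖₁ ≤ -⟨sign x₀_I, u⟩`.
The certificate `d = d(x₀)` satisfies `A_Iᵗ d = sign x₀_I`, so
`⟨sign x₀_I, u⟩ = ⟨d, Ah⟩ - ⟨d, A_{Iᶜ} v⟩` with `|⟨d, A_{Iᶜ} v⟩| ≤ IC(x₀) ‖v‖₁`; this gives
`(1 - IC(x₀)) ‖v‖₁ ≤ 2ε ‖d‖₂`. On the support, `u = (A_IᵗA_I)⁻¹A_Iᵗ (Ah - A_{Iᶜ} v)`, and by the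
C*-identity this pseudo-inverse has spectral norm `√‖(A_IᵗA_I)⁻¹‖₂`. Finally `‖h‖₂ ≤ ‖u‖₂ + ‖v‖₁`.
-/

open scoped Matrix.Norms.L2Operator

section VectorNorms

variable {ι : Type*} [Fintype ι]

lemma l2_eq_norm (x : ι → ℝ) : l2 x = ‖WithLp.toLp 2 x‖ := by
  simp [l2, EuclideanSpace.norm_eq]

lemma l2_nonneg (x : ι → ℝ) : 0 ≤ l2 x := Real.sqrt_nonneg _

lemma l2_add_le (x y : ι → ℝ) : l2 (x + y) ≤ l2 x + l2 y := by
  simpa only [l2_eq_norm, WithLp.toLp_add] using norm_add_le _ _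

lemma l2_sub_le (x y : ι → ℝ) : l2 (x - y) ≤ l2 x + l2 y := by
  simpa only [l2_eq_norm, WithLp.toLp_sub] using norm_sub_le _ _

lemma abs_dotProduct_le_l2_mul_l2_s12 (x y : ι → ℝ) : |x ⬝ᵥ y| ≤ l2 x * l2 y := by
  simpa [l2_eq_norm, EuclideanSpace.inner_toLp_toLp, dotProduct_comm] using
    abs_real_inner_le_norm (WithLp.toLp 2 x) (WithLp.toLp 2 y)

lemma abs_dotProduct_le_mul_l1 {w : ι → ℝ} {c : ℝ} (hw : ∀ i, |w i| ≤ c) (v : ι → ℝ) :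
    |w ⬝ᵥ v| ≤ c * l1 v :=
  calc |w ⬝ᵥ v| ≤ ∑ i, |w i| * |v i| := by
        simpa only [dotProduct, abs_mul] using
          Finset.abs_sum_le_sum_abs (fun i => w i * v i) Finset.univ
    _ ≤ ∑ i, c * |v i| := by gcongr with i; exact hw i
    _ = c * l1 v := (Finset.mul_sum _ _ _).symm

lemma l1_nonneg (x : ι → ℝ) : 0 ≤ l1 x := Finset.sum_nonneg fun i _ => abs_nonneg (x i)

lemma l2_le_l1 (x : ι → ℝ) : l2 x ≤ l1 x := by
  rw [l2, Real.sqrt_le_left (l1_nonneg x), l1]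
  simpa only [sq_abs] using Finset.sum_sq_le_sq_sum_of_nonneg fun i _ => abs_nonneg (x i)

lemma l2_le_add_compl [DecidableEq ι] (x : ι → ℝ) (I : Finset ι) :
    l2 x ≤ l2 (fun i : I => x i) + l2 (fun i : ↥Iᶜ => x i) := by
  have hsq : l2 x ^ 2 = l2 (fun i : I => x i) ^ 2 + l2 (fun i : ↥Iᶜ => x i) ^ 2 := by
    simp only [l2, Real.sq_sqrt (Finset.sum_nonneg fun _ _ => sq_nonneg _)]
    rw [Finset.sum_coe_sort I fun i => x i ^ 2, Finset.sum_coe_sort Iᶜ fun i => x i ^ 2,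
      Finset.sum_add_sum_compl]
  nlinarith [l2_nonneg x, l2_nonneg (fun i : I => x i), l2_nonneg (fun i : ↥Iᶜ => x i)]

end VectorNorms

section OperatorNorms

variable {ι κ : Type*} [Fintype ι] [Fintype κ]

lemma l2_mulVec_le [DecidableEq κ] (M : Matrix ι κ ℝ) (x : κ → ℝ) :
    l2 (M *ᵥ x) ≤ ‖M‖ * l2 x := by
  rw [l2_eq_norm, l2_eq_norm]
  exact Matrix.l2_opNorm_mulVec M (WithLp.toLp 2 x)

lemma opNorm2_eq_l2_opNorm [DecidableEq κ] (M : Matrix ι κ ℝ) : opNorm2 M = ‖M‖ := by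
  have hbdd : ∀ y ∈ {y | ∃ x : κ → ℝ, l2 x ≤ 1 ∧ y = l2 (M *ᵥ x)}, y ≤ ‖M‖ := by
    rintro _ ⟨x, hx, rfl⟩
    exact (l2_mulVec_le M x).trans (mul_le_of_le_one_right (norm_nonneg M) hx)
  refine le_antisymm (csSup_le ⟨0, 0, by simp [l2], by simp [l2]⟩ hbdd) ?_
  rw [Matrix.l2_opNorm_def]
  refine ContinuousLinearMap.opNorm_le_of_unit_norm (Real.sSup_nonneg ?_) fun x hx => ?_
  · rintro _ ⟨x, -, rfl⟩
    exact l2_nonneg _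
  · refine le_csSup ⟨‖M‖, hbdd⟩ ⟨x.ofLp, ?_, ?_⟩
    · rw [l2_eq_norm, WithLp.toLp_ofLp, hx]
    · rw [l2_eq_norm]; rfl

lemma l2_mulVec_le_norm12_mul_l1 (M : Matrix ι κ ℝ) (x : κ → ℝ) :
    l2 (M *ᵥ x) ≤ norm12 M * l1 x := by
  classical
  rcases eq_or_ne x 0 with rfl | hx
  · simp [l2, l1]
  have hl1 : 0 < l1 x := by
    obtain ⟨i, hi⟩ := Function.ne_iff.mp hx
    exact (abs_pos.mpr hi).trans_le
      (Finset.single_le_sum (fun j _ => abs_nonneg (x j)) (Finset.mem_univ i))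
  have hbdd : BddAbove {y | ∃ z : κ → ℝ, z ≠ 0 ∧ y = l2 (M *ᵥ z) / l1 z} := by
    refine ⟨‖M‖, ?_⟩
    rintro _ ⟨z, -, rfl⟩
    exact div_le_of_le_mul₀ (l1_nonneg z) (norm_nonneg M)
      ((l2_mulVec_le M z).trans (mul_le_mul_of_nonneg_left (l2_le_l1 z) (norm_nonneg M)))
  rw [← div_le_iff₀ hl1]
  exact le_csSup hbdd ⟨x, hx, rfl⟩

lemma norm12_nonneg (M : Matrix ι κ ℝ) : 0 ≤ norm12 M := by
  refine Real.sSup_nonneg ?_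
  rintro _ ⟨x, -, rfl⟩
  exact div_nonneg (l2_nonneg _) (l1_nonneg _)

end OperatorNorms

section LeastSquares

variable {ι κ : Type*} [Fintype ι] [Fintype κ] [DecidableEq κ]

lemma l2_le_sqrt_opNorm2_inv_gram_mul (B : Matrix ι κ ℝ) (hB : IsUnit (Bᵀ * B).det)
    (u : κ → ℝ) : l2 u ≤ √(opNorm2 (Bᵀ * B)⁻¹) * l2 (B *ᵥ u) := by
  classical
  set G := Bᵀ * B
  set P := G⁻¹ * Bᵀ
  have hPB : P * B = 1 := by rw [Matrix.mul_assoc, Matrix.nonsing_inv_mul _ hB]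
  have hPPt : P * Pᴴ = G⁻¹ := by
    have hG : Gᵀ = G := by rw [Matrix.transpose_mul, Matrix.transpose_transpose]
    rw [Matrix.conjTranspose_eq_transpose_of_trivial, Matrix.transpose_mul,
      Matrix.transpose_transpose, Matrix.transpose_nonsing_inv, hG, ← Matrix.mul_assoc, hPB,
      Matrix.one_mul]
  -- C*-identity: `‖P‖² = ‖P Pᴴ‖ = ‖(BᵀB)⁻¹‖`
  have hP : ‖P‖ = √‖G⁻¹‖ := by
    rw [← hPPt, ← Matrix.conjTranspose_conjTranspose P, Matrix.conjTranspose_conjTranspose Pᴴ,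
      Matrix.l2_opNorm_conjTranspose_mul_self, Real.sqrt_mul_self (norm_nonneg _),
      Matrix.l2_opNorm_conjTranspose]
  calc l2 u = l2 (P *ᵥ (B *ᵥ u)) := by rw [Matrix.mulVec_mulVec, hPB, Matrix.one_mulVec]
    _ ≤ ‖P‖ * l2 (B *ᵥ u) := l2_mulVec_le P _
    _ = √(opNorm2 G⁻¹) * l2 (B *ᵥ u) := by rw [hP, opNorm2_eq_l2_opNorm]

end LeastSquares

lemma Real.sign_mul_self_eq_abs_s12 (t : ℝ) : Real.sign t * t = |t| := by
  rcases lt_trichotomy t 0 with ht | rfl | ht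
  · rw [Real.sign_of_neg ht, abs_of_neg ht, neg_one_mul]
  · simp
  · rw [Real.sign_of_pos ht, abs_of_pos ht, one_mul]

lemma Real.sign_mul_le_abs_s12 (t s : ℝ) : Real.sign t * s ≤ |s| := by
  rcases Real.sign_apply_eq t with h | h | h <;> rw [h]
  · simpa using neg_le_abs s
  · simp
  · simpa using le_abs_self s

lemma sum_compl_abs_sub_le_neg_sum_sign_mul_sub {ι : Type*} [Fintype ι] [DecidableEq ι]
    {I : Finset ι} {x0 x1 : ι → ℝ} (hx0 : ∀ i ∉ I, x0 i = 0) (hl1 : l1 x1 ≤ l1 x0) :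
    ∑ i ∈ Iᶜ, |x1 i - x0 i| ≤ -∑ i ∈ I, Real.sign (x0 i) * (x1 i - x0 i) := by
  have h0 : l1 x0 = ∑ i ∈ I, Real.sign (x0 i) * x0 i := by
    have hc : ∑ i ∈ Iᶜ, |x0 i| = 0 :=
      Finset.sum_eq_zero fun i hi => by rw [hx0 i (Finset.mem_compl.mp hi), abs_zero]
    rw [l1, ← Finset.sum_add_sum_compl I, hc, add_zero]
    exact Finset.sum_congr rfl fun i _ => (Real.sign_mul_self_eq_abs_s12 _).symm
  have h1 : ∑ i ∈ I, Real.sign (x0 i) * x1 i + ∑ i ∈ Iᶜ, |x1 i - x0 i| ≤ l1 x1 := by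
    rw [l1, ← Finset.sum_add_sum_compl I]
    refine add_le_add (Finset.sum_le_sum fun i _ => Real.sign_mul_le_abs_s12 _ _)
      (Finset.sum_le_sum fun i hi => ?_)
    rw [hx0 i (Finset.mem_compl.mp hi), sub_zero]
  simp only [mul_sub, Finset.sum_sub_distrib]
  linarith

section SupportSplitting

variable {n m : ℕ} (A : Matrix (Fin n) (Fin m) ℝ) (I : Finset (Fin m))

lemma mulVec_eq_colSub_add_colSub_compl (h : Fin m → ℝ) :
    A *ᵥ h = colSub A I *ᵥ (fun j : I => h j) + colSub A Iᶜ *ᵥ (fun j : ↥Iᶜ => h j) := by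
  funext i
  simp only [Matrix.mulVec, dotProduct, Pi.add_apply, colSub]
  rw [Finset.sum_coe_sort I fun j => A i j * h j, Finset.sum_coe_sort Iᶜ fun j => A i j * h j,
    Finset.sum_add_sum_compl]

lemma colSub_transpose_mulVec_dvec (x : Fin m → ℝ) (hinv : IsUnit (gram A I).det) :
    (colSub A I)ᵀ *ᵥ dvec A I x = signI x I := by
  rw [dvec, Matrix.mulVec_mulVec, Matrix.mulVec_mulVec, ← _root_.gram,
    Matrix.mul_nonsing_inv _ hinv, Matrix.one_mulVec]

lemma abs_colSub_compl_transpose_mulVec_dvec_le_IC (x : Fin m → ℝ) (j : ↥Iᶜ) :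
    |((colSub A Iᶜ)ᵀ *ᵥ dvec A I x) j| ≤ IC A I x := by
  have hbdd : BddAbove {y | ∃ j ∉ I, y = |∑ i, A i j * dvec A I x i|} :=
    ((Set.finite_range fun j => |∑ i, A i j * dvec A I x i|).subset
      (by rintro _ ⟨j, -, rfl⟩; exact ⟨j, rfl⟩)).bddAbove
  exact le_csSup hbdd ⟨j, Finset.mem_compl.mp j.2, rfl⟩

lemma abs_dvec_dotProduct_colSub_compl_le (x : Fin m → ℝ) (v : ↥Iᶜ → ℝ) :
    |dvec A I x ⬝ᵥ colSub A Iᶜ *ᵥ v| ≤ IC A I x * l1 v := by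
  rw [Matrix.dotProduct_mulVec, ← Matrix.mulVec_transpose]
  exact abs_dotProduct_le_mul_l1 (abs_colSub_compl_transpose_mulVec_dvec_le_IC A I x) v

end SupportSplitting

section ErrorBound

variable {n m : ℕ} (A : Matrix (Fin n) (Fin m) ℝ) (I : Finset (Fin m))

lemma one_sub_IC_mul_l1_compl_le {x0 x1 : Fin m → ℝ} (hinv : IsUnit (gram A I).det)
    (hx0 : ∀ i ∉ I, x0 i = 0) (hl1 : l1 x1 ≤ l1 x0) :
    (1 - IC A I x0) * l1 (fun j : ↥Iᶜ => (x1 - x0) j) ≤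
      l2 (dvec A I x0) * l2 (A *ᵥ (x1 - x0)) := by
  set h := x1 - x0
  set d := dvec A I x0
  set v : ↥Iᶜ → ℝ := fun j => h j
  have hcone : l1 v ≤ -(signI x0 I ⬝ᵥ fun j : I => h j) := by
    have := sum_compl_abs_sub_le_neg_sum_sign_mul_sub hx0 hl1
    rwa [← Finset.sum_coe_sort Iᶜ, ← Finset.sum_coe_sort I] at this
  have hcert : (signI x0 I ⬝ᵥ fun j : I => h j) = d ⬝ᵥ A *ᵥ h - d ⬝ᵥ colSub A Iᶜ *ᵥ v := by
    rw [← colSub_transpose_mulVec_dvec A I x0 hinv, Matrix.mulVec_transpose,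
      ← Matrix.dotProduct_mulVec, mulVec_eq_colSub_add_colSub_compl A I h, dotProduct_add,
      add_sub_cancel_right]
  have hAh := (neg_le_abs _).trans (abs_dotProduct_le_l2_mul_l2_s12 d (A *ᵥ h))
  have hoff := (le_abs_self _).trans (abs_dvec_dotProduct_colSub_compl_le A I x0 v)
  rw [hcert] at hcone
  linarith

lemma l2_restrict_le_sqrt_opNorm2_mul {h : Fin m → ℝ} (hinv : IsUnit (gram A I).det) :
    l2 (fun j : I => h j) ≤ √(opNorm2 (gram A I)⁻¹) *
      (l2 (A *ᵥ h) + norm12 (colSub A Iᶜ) * l1 (fun j : ↥Iᶜ => h j)) := by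
  set v : ↥Iᶜ → ℝ := fun j => h j
  calc l2 (fun j : I => h j)
      ≤ √(opNorm2 (gram A I)⁻¹) * l2 (colSub A I *ᵥ fun j : I => h j) :=
        l2_le_sqrt_opNorm2_inv_gram_mul _ hinv _
    _ = √(opNorm2 (gram A I)⁻¹) * l2 (A *ᵥ h - colSub A Iᶜ *ᵥ v) := by
        rw [mulVec_eq_colSub_add_colSub_compl A I h, add_sub_cancel_right]
    _ ≤ √(opNorm2 (gram A I)⁻¹) * (l2 (A *ᵥ h) + norm12 (colSub A Iᶜ) * l1 v) := by
        gcongr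
        exact (l2_sub_le _ _).trans (add_le_add le_rfl (l2_mulVec_le_norm12_mul_l1 _ v))

end ErrorBound

/-- the ℓ² error bound holds for any feasible vector with smaller ℓ¹ norm. -/
theorem l2_error_bound_feasible {n m : ℕ} (A : Matrix (Fin n) (Fin m) ℝ)
    (x0 x1 : Fin m → ℝ) (b y : Fin n → ℝ) (ε : ℝ)
    (I : Finset (Fin m)) (hI : ∀ i, i ∈ I ↔ x0 i ≠ 0)
    (hinv : IsUnit (gram A I).det) (hIC : IC A I x0 < 1)
    (hy : y = A.mulVec x0 + b) (hb : l2 b ≤ ε)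
    (hfeas : l2 (A.mulVec x1 - y) ≤ ε) (hl1 : l1 x1 ≤ l1 x0) :
    l2 (x1 - x0) ≤
      2 * ε * (Real.sqrt (opNorm2 ((gram A I)⁻¹)) +
        l2 (dvec A I x0) / (1 - IC A I x0) *
          (Real.sqrt (opNorm2 ((gram A I)⁻¹)) * norm12 (colSub A Iᶜ) + 1)) := by
  have hx0 : ∀ i ∉ I, x0 i = 0 := fun i hi => not_not.mp fun h => hi ((hI i).mpr h)
  set h := x1 - x0
  set S := √(opNorm2 (gram A I)⁻¹)
  set N := norm12 (colSub A Iᶜ)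
  set v : ↥Iᶜ → ℝ := fun j => h j
  have hAh : l2 (A *ᵥ h) ≤ 2 * ε := by
    have hres : A *ᵥ h = (A *ᵥ x1 - y) + b := by rw [hy, Matrix.mulVec_sub]; abel
    rw [hres, two_mul]
    exact (l2_add_le _ _).trans (add_le_add hfeas hb)
  have hv : l1 v ≤ 2 * ε * l2 (dvec A I x0) / (1 - IC A I x0) := by
    rw [le_div_iff₀ (sub_pos.mpr hIC)]
    nlinarith [one_sub_IC_mul_l1_compl_le A I hinv hx0 hl1, l2_nonneg (dvec A I x0)]
  have hSN : 0 ≤ S * N + 1 :=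
    add_nonneg (mul_nonneg (Real.sqrt_nonneg _) (norm12_nonneg _)) zero_le_one
  calc l2 h ≤ l2 (fun j : I => h j) + l1 v :=
        (l2_le_add_compl h I).trans (add_le_add le_rfl (l2_le_l1 v))
    _ ≤ S * (2 * ε + N * l1 v) + l1 v := by
        gcongr
        exact (l2_restrict_le_sqrt_opNorm2_mul A I hinv).trans (by gcongr)
    _ = 2 * ε * S + (S * N + 1) * l1 v := by ring
    _ ≤ 2 * ε * S + (S * N + 1) * (2 * ε * l2 (dvec A I x0) / (1 - IC A I x0)) := by gcongr
    _ = _ := by ring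
end
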